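/- Let ℓ, r ∈ ℕ₀ and let m ≥ 4+2ℓ be even. If z = x+iy ∈ ℍ satisfies y > Im(M𝔷) for all M ∈ SL₂(ℤ), then H^{(r)}_{m,ℓ}(𝔷,z) = 2πi Σ_{n≥0} Σ_{c,d∈ℤ, gcd(c,d)=1} (|c𝔷+d|²/𝔷₂)^ℓ (2πin)^r B_{m,c,d}(𝔷,n) q^n. -/

import Mathlib

open Complex Real Filter Topology

namespace RamanujanMero

noncomputable section

/-- `ρ = e^{πi/3}`. -/
def rho : ℂ := Complex.exp ((π : ℂ) * Complex.I / 3)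

/-- `e(t) = e^{2πit}` for real `t`. -/
def eR (t : ℝ) : ℂ := Complex.exp (2 * (π : ℂ) * Complex.I * (t : ℂ))

/-- `q = e^{2πiz}`. -/
def qexp (z : ℂ) : ℂ := Complex.exp (2 * (π : ℂ) * Complex.I * z)

-- A chosen completion `(a,b)` of `(c,d)` to a unimodular pair: `a*d - b*c = 1`.
open scoped Classical in
def completion (c d : ℤ) : ℤ × ℤ :=
  if h : ∃ p : ℤ × ℤ, p.1 * d - p.2 * c = 1 then h.choose else (0, 0)

/-- The Möbius image `M𝔷 = (a𝔷+b)/(c𝔷+d)` for the coset of `Γ∞\SL₂(ℤ)` with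
bottom row `(c,d)`, using the chosen completion. -/
def moeb (c d : ℤ) (𝔷 : ℂ) : ℂ :=
  (((completion c d).1 : ℂ) * 𝔷 + ((completion c d).2 : ℂ)) / ((c : ℂ) * 𝔷 + (d : ℂ))

/-- Coprime pairs of integers, parametrizing `Γ∞\SL₂(ℤ)` by bottom rows. -/
def CoprimePair : Type := {p : ℤ × ℤ // IsCoprime p.1 p.2}

/-- The Poincaré series `H_{m,ℓ}(𝔷,z)`. -/
def Hml (m ℓ : ℕ) (𝔷 z : ℂ) : ℂ :=
  2 * (π : ℂ) * Complex.I *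
    ∑' p : CoprimePair,
      ((((moeb p.1.1 p.1.2 𝔷).im ^ ℓ)⁻¹ : ℝ) : ℂ) *
        (((p.1.1 : ℂ) * 𝔷 + (p.1.2 : ℂ)) ^ m)⁻¹ *
        (1 - Complex.exp (2 * (π : ℂ) * Complex.I * (z - moeb p.1.1 p.1.2 𝔷)))⁻¹

/-- `H^{(r)}_{m,ℓ}(𝔷,z) = ∂^r/∂z^r H_{m,ℓ}(𝔷,z)`. -/
def Hder (m ℓ r : ℕ) (𝔷 z : ℂ) : ℂ := iteratedDeriv r (Hml m ℓ 𝔷) z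

/-- The differential operator `∂/∂X_𝔷(α) = ((α-𝔷̄)²/(2i𝔷₂)) ∂/∂α`. -/
def Xderiv (𝔷 : ℂ) (f : ℂ → ℂ) : ℂ → ℂ :=
  fun α => ((α - (starRingEnd ℂ) 𝔷) ^ 2 / (2 * Complex.I * (𝔷.im : ℂ))) * deriv f α

/-- `Y_{2−m,ν}(𝔷,z)` for `ν ∈ -ℕ`. -/
def Yser (m : ℕ) (ν : ℤ) (𝔷 z : ℂ) : ℂ :=
  ((((-ν - 1).toNat.factorial : ℕ) : ℂ))⁻¹ *
    ((Xderiv 𝔷)^[(-ν - 1).toNat]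
      (fun α => (α - (starRingEnd ℂ) 𝔷) ^ m * Hml m 0 α z)) 𝔷

/-- `B_{m,c,d}(𝔷,n)`. -/
def Bcd (m : ℕ) (c d : ℤ) (𝔷 : ℂ) (n : ℕ) : ℂ :=
  (((c : ℂ) * 𝔷 + (d : ℂ)) ^ m)⁻¹ *
    ((Real.exp (2 * π * n * 𝔷.im / Complex.normSq ((c : ℂ) * 𝔷 + (d : ℂ))) : ℝ) : ℂ) *
    eR (-(n * ((((completion c d).1 * c : ℤ) : ℝ) * Complex.normSq 𝔷 +
        (((completion c d).2 * d : ℤ) : ℝ) +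
        𝔷.re * (((completion c d).1 * d + (completion c d).2 * c : ℤ) : ℝ)) /
          Complex.normSq ((c : ℂ) * 𝔷 + (d : ℂ))))

/-- The ring of integers `ℤ[𝔷]` of `ℚ(𝔷)`, as a subring of `ℂ` (for `𝔷 ∈ {i, ρ}`). -/
def ringOf (𝔷 : ℂ) : Subring ℂ := Subring.closure {𝔷}

/-- `𝔷` as an element of `ℤ[𝔷]`. -/
def zel (𝔷 : ℂ) : ringOf 𝔷 := ⟨𝔷, Subring.subset_closure (Set.mem_singleton 𝔷)⟩

/-- The norm of an ideal. -/
def inorm (𝔷 : ℂ) (b : Ideal (ringOf 𝔷)) : ℕ := Nat.card (↥(ringOf 𝔷) ⧸ b)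

/-- An ideal is primitive if it is not divisible by (i.e. contained in) any ideal `(g)`
with `g ∈ ℤ`, `g ≥ 2`. -/
def IsPrimitiveIdeal {R : Type*} [CommRing R] (b : Ideal R) : Prop :=
  ∀ g : ℤ, 2 ≤ g → ¬ b ≤ Ideal.span {(g : R)}

/-- Nonzero primitive ideals of `ℤ[𝔷]`. -/
def PrimIdeal (𝔷 : ℂ) : Type := {b : Ideal (ringOf 𝔷) // b ≠ ⊥ ∧ IsPrimitiveIdeal b}

-- A chosen coprime pair `(c,d)` with `b = (c𝔷 + d)`.
open scoped Classical in
def genPair (𝔷 : ℂ) (b : Ideal (ringOf 𝔷)) : ℤ × ℤ :=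
  if h : ∃ p : ℤ × ℤ, IsCoprime p.1 p.2 ∧
      b = Ideal.span {(p.1 : ringOf 𝔷) * zel 𝔷 + (p.2 : ringOf 𝔷)} then h.choose else (1, 0)

/-- `ω_𝔷`, the order of the stabilizer of `𝔷` in `PSL₂(ℤ)` (for `𝔷 ∈ {i, ρ}`). -/
def omegaZ (𝔷 : ℂ) : ℕ := if 𝔷 = Complex.I then 2 else 3

/-- `C_k(b,n)`, for a primitive ideal `b` of `ℤ[i]` (if `𝔷 = i`) resp. `ℤ[ρ]`. -/
def Cfun (𝔷 : ℂ) (k : ℕ) (b : Ideal (ringOf 𝔷)) (n : ℕ) : ℝ :=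
  let c : ℤ := (genPair 𝔷 b).1
  let d : ℤ := (genPair 𝔷 b).2
  let a : ℤ := (completion c d).1
  let b' : ℤ := (completion c d).2
  if 𝔷 = Complex.I then
    Real.cos (2 * π * n * ((a * c + b' * d : ℤ) : ℝ) / (inorm 𝔷 b) +
      k * Real.arctan ((c : ℝ) / (d : ℝ)))
  else
    (-1 : ℝ) ^ n *
      Real.cos (π * n * ((a * d + b' * c - 2 * a * c - 2 * b' * d : ℤ) : ℝ) / (inorm 𝔷 b) +
        π * n - k * Real.arctan ((c : ℝ) * Real.sqrt 3 / (2 * (d : ℝ) - (c : ℝ))))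

/-- The series `F_{k,ℓ,r}(𝔷;q)`. -/
def Fser (k ℓ r : ℕ) (𝔷 z : ℂ) : ℂ :=
  ∑' n : ℕ,
    (∑' b : PrimIdeal 𝔷,
      ((Cfun 𝔷 k b.1 n * (inorm 𝔷 b.1 : ℝ) ^ ((ℓ : ℝ) - (k : ℝ) / 2) * (n : ℝ) ^ r *
        Real.exp (2 * π * n * 𝔷.im / (inorm 𝔷 b.1)) : ℝ) : ℂ)) * qexp z ^ n

/-- The quasimodular Eisenstein series `E₂`. -/
def E2 (z : ℂ) : ℂ :=
  1 - 24 * ∑' n : ℕ, ((ArithmeticFunction.sigma 1 (n + 1) : ℕ) : ℂ) * qexp z ^ (n + 1)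

/-- The Eisenstein series `E₄`. -/
def E4 (z : ℂ) : ℂ :=
  1 + 240 * ∑' n : ℕ, ((ArithmeticFunction.sigma 3 (n + 1) : ℕ) : ℂ) * qexp z ^ (n + 1)

/-- The Eisenstein series `E₆`. -/
def E6 (z : ℂ) : ℂ :=
  1 - 504 * ∑' n : ℕ, ((ArithmeticFunction.sigma 5 (n + 1) : ℕ) : ℂ) * qexp z ^ (n + 1)

/-- The modular completion `Ê₂` of `E₂`. -/
def E2hat (z : ℂ) : ℂ := E2 z - 3 / ((π : ℂ) * (z.im : ℂ))

/-- The discriminant function `Δ`. -/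
def Δfun (z : ℂ) : ℂ := (E4 z ^ 3 - E6 z ^ 2) / 1728

/-- The `j`-invariant. -/
def jfun (z : ℂ) : ℂ := E4 z ^ 3 / Δfun z

/-- `SL₂(ℤ)`. -/
abbrev SL2Z := Matrix.SpecialLinearGroup (Fin 2) ℤ

/-- The Möbius action of `SL₂(ℤ)` on `ℂ` (partial; used on the upper half-plane). -/
def act (M : SL2Z) (z : ℂ) : ℂ :=
  (((M.1 0 0 : ℤ) : ℂ) * z + ((M.1 0 1 : ℤ) : ℂ)) /
    (((M.1 1 0 : ℤ) : ℂ) * z + ((M.1 1 1 : ℤ) : ℂ))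

/-- A meromorphic modular form of weight `κ` for `SL₂(ℤ)`, holomorphic at `i∞`,
whose only poles modulo `SL₂(ℤ)` are at `z = 𝔷` and have order at most `ν`. -/
structure IsMeroModularPoles (κ : ℤ) (𝔷 : ℂ) (ν : ℕ) (F : ℂ → ℂ) : Prop where
  transform : ∀ M : SL2Z, ∀ z : ℂ, 0 < z.im →
    F (act M z) = (((M.1 1 0 : ℤ) : ℂ) * z + ((M.1 1 1 : ℤ) : ℂ)) ^ κ * F z
  holo : ∀ z : ℂ, 0 < z.im → (∀ M : SL2Z, z ≠ act M 𝔷) → AnalyticAt ℂ F z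
  pole : ∀ z : ℂ, 0 < z.im → (∃ M : SL2Z, z = act M 𝔷) →
    ∃ g : ℂ → ℂ, AnalyticAt ℂ g z ∧ ∀ᶠ w in nhdsWithin z {z}ᶜ, F w = g w / (w - z) ^ ν
  bounded_at_inf : ∃ C Y : ℝ, ∀ z : ℂ, Y < z.im → ‖F z‖ ≤ C

/-- A meromorphic cusp form of weight `m` for `SL₂(ℤ)` whose only poles modulo
`SL₂(ℤ)` are at the point `z₀` and have order at most `ν`. -/
structure IsMeroCuspFormPoles (m : ℕ) (z₀ : ℂ) (ν : ℕ) (G : ℂ → ℂ) : Prop where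
  transform : ∀ M : SL2Z, ∀ z : ℂ, 0 < z.im →
    G (act M z) = (((M.1 1 0 : ℤ) : ℂ) * z + ((M.1 1 1 : ℤ) : ℂ)) ^ m * G z
  holo : ∀ z : ℂ, 0 < z.im → (∀ M : SL2Z, z ≠ act M z₀) → AnalyticAt ℂ G z
  pole : ∀ z : ℂ, 0 < z.im → (∃ M : SL2Z, z = act M z₀) →
    ∃ g : ℂ → ℂ, AnalyticAt ℂ g z ∧ ∀ᶠ w in nhdsWithin z {z}ᶜ, G w = g w / (w - z) ^ ν
  zero_at_inf : Tendsto G (comap Complex.im atTop) (nhds 0)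

/-- A holomorphic cusp form of weight `m` for `SL₂(ℤ)`. -/
structure IsCuspForm (m : ℕ) (f : ℂ → ℂ) : Prop where
  holo : ∀ z : ℂ, 0 < z.im → AnalyticAt ℂ f z
  transform : ∀ M : SL2Z, ∀ z : ℂ, 0 < z.im →
    f (act M z) = (((M.1 1 0 : ℤ) : ℂ) * z + ((M.1 1 1 : ℤ) : ℂ)) ^ m * f z
  zero_at_inf : Tendsto f (comap Complex.im atTop) (nhds 0)

/-- `𝓕^{(r)}_{m,ℓ}(𝔷,z)`. -/
def Fcal (m ℓ r : ℕ) (𝔷 z : ℂ) : ℂ :=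
  ∑ j ∈ Finset.range (ℓ + 1),
    ((ℓ.choose j : ℕ) : ℂ) * (3 / (π : ℂ)) ^ (ℓ - j) * E2hat 𝔷 ^ j * Hder (m - 2 * j) (ℓ - j) r 𝔷 z


/-!
For `Im v` above every `Im (M𝔷)`, each summand `(1 - e(v - M𝔷))⁻¹` of the Poincaré series is a
geometric series `∑ₙ e(n (v - M𝔷))`. The supremum of `Im (M𝔷)` over `SL₂(ℤ)` is attained, so on a
half-plane slightly above it these geometric terms decay uniformly like `ρⁿ` with `ρ < 1`; since
`∑ |c𝔷 + d|^(2ℓ - m)` converges for `m > 2ℓ + 2`, the double series over coprime pairs and `n`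
converges absolutely and uniformly together with all its termwise derivatives. It may therefore be
differentiated termwise and summed over the pairs first. Finally `(c𝔷 + d)^(-m) e(-n M𝔷)` is
`B_{m,c,d}(𝔷, n)` by the explicit formula
`M𝔷 = (ac|𝔷|² + bd + 𝔷₁(ad + bc) + i𝔷₂) / |c𝔷 + d|²`.
-/

theorem norm_exp_two_pi_I_mul (u : ℂ) :
    ‖cexp (2 * π * I * u)‖ = Real.exp (-(2 * π * u.im)) := by
  rw [Complex.norm_exp]
  congr 1
  simp [Complex.mul_re, Complex.mul_im]

section ExpKernel

variable {ι : Type*} (a w : ι → ℂ)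

def expKernelSum (v : ℂ) : ℂ :=
  ∑' i, a i * (1 - cexp (2 * π * I * (v - w i)))⁻¹

def expKernelTerm (k : ℕ) (x : ι × ℕ) (v : ℂ) : ℂ :=
  (2 * π * I * x.2) ^ k * a x.1 * cexp (2 * π * I * (x.2 * (v - w x.1)))

theorem hasDerivAt_expKernelTerm (k : ℕ) (x : ι × ℕ) (v : ℂ) :
    HasDerivAt (expKernelTerm a w k x) (expKernelTerm a w (k + 1) x v) v := by
  have h := ((((hasDerivAt_id' v).sub_const (w x.1)).const_mul (x.2 : ℂ)).const_mul
    (2 * π * I)).cexp.const_mul ((2 * π * I * x.2) ^ k * a x.1)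
  refine h.congr_deriv ?_
  rw [expKernelTerm, mul_one, pow_succ]
  ring

variable {a w}

theorem norm_expKernelTerm_le {T S : ℝ} {k : ℕ} {x : ι × ℕ} {v : ℂ} (hw : (w x.1).im ≤ T)
    (hv : S ≤ v.im) :
    ‖expKernelTerm a w k x v‖ ≤
      ‖a x.1‖ * ((2 * π) ^ k * ((x.2 : ℝ) ^ k * Real.exp (-(2 * π * (S - T))) ^ x.2)) := by
  have hfreq : ‖2 * π * I * (x.2 : ℂ)‖ = 2 * π * x.2 := by
    simp [Real.pi_pos.le, abs_of_nonneg]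
  have hdecay : Real.exp (-(2 * π * (x.2 * (v - w x.1)).im)) ≤
      Real.exp (-(2 * π * (S - T))) ^ x.2 := by
    have hgap : (x.2 : ℝ) * (S - T) ≤ x.2 * (v.im - (w x.1).im) := by gcongr
    rw [← Real.exp_nat_mul, Real.exp_le_exp]
    simp only [Complex.mul_im, Complex.natCast_re, Complex.natCast_im, Complex.sub_im,
      zero_mul, add_zero]
    nlinarith [Real.pi_pos]
  rw [expKernelTerm, norm_mul, norm_mul, norm_exp_two_pi_I_mul, norm_pow, hfreq, mul_pow]
  calc (2 * π) ^ k * (x.2 : ℝ) ^ k * ‖a x.1‖ * Real.exp (-(2 * π * (x.2 * (v - w x.1)).im))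
      ≤ (2 * π) ^ k * (x.2 : ℝ) ^ k * ‖a x.1‖ * Real.exp (-(2 * π * (S - T))) ^ x.2 := by
        gcongr
    _ = _ := by ring

theorem summable_expKernelTerm_bound {T S : ℝ} (ha : Summable (‖a ·‖)) (hTS : T < S) (k : ℕ) :
    Summable fun x : ι × ℕ =>
      ‖a x.1‖ * ((2 * π) ^ k * ((x.2 : ℝ) ^ k * Real.exp (-(2 * π * (S - T))) ^ x.2)) := by
  have hρ : ‖Real.exp (-(2 * π * (S - T)))‖ < 1 := by
    rw [Real.norm_of_nonneg (Real.exp_nonneg _), Real.exp_lt_one_iff]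
    nlinarith [Real.pi_pos]
  exact ha.mul_of_nonneg ((summable_pow_mul_geometric_of_norm_lt_one k hρ).mul_left _)
    (fun _ => norm_nonneg _) (fun _ => by positivity)

theorem mul_inv_one_sub_exp_eq_tsum_expKernelTerm {i : ι} {v : ℂ} (hv : (w i).im < v.im) :
    a i * (1 - cexp (2 * π * I * (v - w i)))⁻¹ = ∑' n : ℕ, expKernelTerm a w 0 (i, n) v := by
  have hq : ‖cexp (2 * π * I * (v - w i))‖ < 1 := by
    rw [norm_exp_two_pi_I_mul, Real.exp_lt_one_iff, Complex.sub_im]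
    nlinarith [Real.pi_pos]
  rw [← tsum_geometric_of_norm_lt_one hq, ← tsum_mul_left]
  refine tsum_congr fun n => ?_
  rw [expKernelTerm, ← Complex.exp_nat_mul]
  ring_nf

theorem summable_expKernelTerm {T S : ℝ} (ha : Summable (‖a ·‖)) (hw : ∀ i, (w i).im ≤ T)
    (hTS : T < S) (k : ℕ) {v : ℂ} (hv : S ≤ v.im) : Summable (expKernelTerm a w k · v) :=
  (summable_expKernelTerm_bound ha hTS k).of_norm_bounded fun x => norm_expKernelTerm_le (hw x.1) hv

/-- The geometric terms are only dominated uniformly on a half-plane `S < Im` strictly above the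
level `T` of the poles, which is why `S` appears. -/
theorem iteratedDeriv_expKernelSum_eq_tsum_prod {T S : ℝ} (ha : Summable (‖a ·‖))
    (hw : ∀ i, (w i).im ≤ T) (hTS : T < S) (k : ℕ) {v : ℂ} (hv : S < v.im) :
    iteratedDeriv k (expKernelSum a w) v =
      ∑' x : ι × ℕ, expKernelTerm a w k x v := by
  have ht : IsOpen {u : ℂ | S < u.im} := isOpen_lt continuous_const Complex.continuous_im
  induction k generalizing v with
  | zero =>
    have hsum := summable_expKernelTerm ha hw hTS 0 hv.le
    rw [iteratedDeriv_zero, expKernelSum, hsum.tsum_prod' hsum.prod_factor]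
    exact tsum_congr fun i =>
      mul_inv_one_sub_exp_eq_tsum_expKernelTerm ((hw i).trans_lt (hTS.trans hv))
  | succ k ih =>
    have hev : iteratedDeriv k (expKernelSum a w) =ᶠ[𝓝 v]
        fun u => ∑' x : ι × ℕ, expKernelTerm a w k x u :=
      Filter.eventually_of_mem (ht.mem_nhds hv) fun u hu => ih hu
    rw [iteratedDeriv_succ, hev.deriv_eq]
    exact (hasDerivAt_tsum_of_isPreconnected (summable_expKernelTerm_bound ha hTS (k + 1)) ht
      (convex_halfSpace_im_gt S).isPreconnected (fun x u _ => hasDerivAt_expKernelTerm a w k x u)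
      (fun x u hu => norm_expKernelTerm_le (hw x.1) (le_of_lt hu)) hv
      (summable_expKernelTerm ha hw hTS k hv.le) hv).deriv

theorem iteratedDeriv_expKernelSum {T : ℝ} (ha : Summable (‖a ·‖)) (hw : ∀ i, (w i).im ≤ T)
    (k : ℕ) {v : ℂ} (hv : T < v.im) :
    iteratedDeriv k (expKernelSum a w) v =
      ∑' n : ℕ, ∑' i, expKernelTerm a w k (i, n) v := by
  have hTS : T < (T + v.im) / 2 := by linarith
  have hsum := (summable_expKernelTerm ha hw hTS k (v := v) (by linarith)).prod_symm
  rw [iteratedDeriv_expKernelSum_eq_tsum_prod ha hw hTS k (by linarith),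
    ← (Equiv.prodComm ℕ ι).tsum_eq]
  exact hsum.tsum_prod' hsum.prod_factor

end ExpKernel

section CoprimePairs

theorem completion_det {c d : ℤ} (h : IsCoprime c d) :
    (completion c d).1 * d - (completion c d).2 * c = 1 := by
  obtain ⟨u, v, huv⟩ := h
  have hex : ∃ p : ℤ × ℤ, p.1 * d - p.2 * c = 1 := ⟨(v, -u), by dsimp only; linarith⟩
  rw [completion, dif_pos hex]
  exact hex.choose_spec

theorem intCast_mul_add_ne_zero {c d : ℤ} (h : IsCoprime c d) {z : ℂ} (hz : 0 < z.im) :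
    (c : ℂ) * z + d ≠ 0 := by
  have hcd : ![(c : ℝ), d] ≠ 0 := by
    intro H
    have hc : c = 0 := by simpa using congrFun H 0
    have hd : d = 0 := by simpa using congrFun H 1
    exact not_isCoprime_zero_zero (hc ▸ hd ▸ h)
  simpa using UpperHalfPlane.linear_ne_zero_of_im hz.ne' hcd

theorem moebius_eq_div_normSq {a b c d : ℤ} {z : ℂ} (hdet : a * d - b * c = 1)
    (hz : (c : ℂ) * z + d ≠ 0) :
    ((a : ℂ) * z + b) / (c * z + d) =
      ((((a * c : ℤ) : ℝ) * normSq z + ((b * d : ℤ) : ℝ) + z.re * ((a * d + b * c : ℤ) : ℝ) : ℝ) +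
        z.im * I) / (normSq (c * z + d) : ℂ) := by
  have hN : (normSq ((c : ℂ) * z + d) : ℂ) ≠ 0 :=
    Complex.ofReal_ne_zero.mpr (Complex.normSq_pos.mpr hz).ne'
  have hdet' : (a : ℂ) * d - b * c = 1 := by exact_mod_cast hdet
  rw [div_eq_div_iff hz hN]
  have hre : (z.re : ℂ) = (z + starRingEnd ℂ z) / 2 := by
    rw [Complex.add_conj]; push_cast; ring
  have him : (z.im : ℂ) * I = (z - starRingEnd ℂ z) / 2 := by
    rw [Complex.sub_conj]; push_cast; ring
  push_cast
  rw [← Complex.mul_conj, ← Complex.mul_conj, hre, him]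
  simp only [map_add, map_mul, map_intCast]
  linear_combination ((z - starRingEnd ℂ z) / 2 * ((c : ℂ) * z + d)) * hdet'

variable {c d : ℤ} {𝔷 : ℂ}

theorem im_moeb (h : IsCoprime c d) (h𝔷 : 0 < 𝔷.im) :
    (moeb c d 𝔷).im = 𝔷.im / normSq (c * 𝔷 + d) := by
  rw [moeb, moebius_eq_div_normSq (completion_det h) (intCast_mul_add_ne_zero h h𝔷),
    Complex.div_ofReal_im]
  simp

theorem Bcd_eq (h : IsCoprime c d) (h𝔷 : 0 < 𝔷.im) (m n : ℕ) :
    Bcd m c d 𝔷 n = (((c : ℂ) * 𝔷 + d) ^ m)⁻¹ * cexp (-(2 * π * I * (n * moeb c d 𝔷))) := by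
  have hN : (normSq ((c : ℂ) * 𝔷 + d) : ℂ) ≠ 0 :=
    Complex.ofReal_ne_zero.mpr (Complex.normSq_pos.mpr (intCast_mul_add_ne_zero h h𝔷)).ne'
  rw [Bcd, eR, moeb, moebius_eq_div_normSq (completion_det h) (intCast_mul_add_ne_zero h h𝔷),
    Complex.ofReal_exp, mul_assoc, ← Complex.exp_add]
  congr 2
  push_cast
  field_simp
  ring_nf
  simp only [Complex.I_sq]
  ring

theorem exists_act_eq_moeb (h : IsCoprime c d) (𝔷 : ℂ) : ∃ M : SL2Z, act M 𝔷 = moeb c d 𝔷 := by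
  refine ⟨⟨!![(completion c d).1, (completion c d).2; c, d], ?_⟩, ?_⟩
  · rw [Matrix.det_fin_two_of]
    linarith [completion_det h]
  · simp [act, moeb]

theorem act_eq_coe_smul (M : SL2Z) (h𝔷 : 0 < 𝔷.im) :
    act M 𝔷 = ((M • (⟨𝔷, h𝔷⟩ : UpperHalfPlane) : UpperHalfPlane) : ℂ) := by
  rw [UpperHalfPlane.coe_specialLinearGroup_apply]
  simp [act]

theorem exists_forall_im_moeb_le (h𝔷 : 0 < 𝔷.im) :
    ∃ M : SL2Z, ∀ p : CoprimePair, (moeb p.1.1 p.1.2 𝔷).im ≤ (act M 𝔷).im := by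
  obtain ⟨g, hg⟩ := ModularGroup.exists_max_im ⟨𝔷, h𝔷⟩
  refine ⟨g, fun p => ?_⟩
  obtain ⟨M, hM⟩ := exists_act_eq_moeb p.2 𝔷
  rw [← hM, act_eq_coe_smul M h𝔷, act_eq_coe_smul g h𝔷]
  exact hg M

end CoprimePairs

section PoincareSeries

def hmlCoeff (m ℓ : ℕ) (𝔷 : ℂ) (p : CoprimePair) : ℂ :=
  ((((moeb p.1.1 p.1.2 𝔷).im ^ ℓ)⁻¹ : ℝ) : ℂ) * (((p.1.1 : ℂ) * 𝔷 + (p.1.2 : ℂ)) ^ m)⁻¹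

variable {m ℓ : ℕ} {𝔷 : ℂ}

theorem norm_hmlCoeff (h𝔷 : 0 < 𝔷.im) (p : CoprimePair) :
    ‖hmlCoeff m ℓ 𝔷 p‖ =
      (𝔷.im ^ ℓ)⁻¹ * ‖(p.1.1 : ℂ) * 𝔷 + p.1.2‖ ^ (-((m : ℝ) - 2 * ℓ)) := by
  have hA : 0 < ‖(p.1.1 : ℂ) * 𝔷 + p.1.2‖ := norm_pos_iff.mpr (intCast_mul_add_ne_zero p.2 h𝔷)
  have hpow : ‖(p.1.1 : ℂ) * 𝔷 + p.1.2‖ ^ (-((m : ℝ) - 2 * ℓ)) =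
      ‖(p.1.1 : ℂ) * 𝔷 + p.1.2‖ ^ (2 * ℓ) / ‖(p.1.1 : ℂ) * 𝔷 + p.1.2‖ ^ m := by
    rw [neg_sub, Real.rpow_sub hA]
    norm_cast
  rw [hpow, hmlCoeff, im_moeb p.2 h𝔷, norm_mul, Complex.norm_real, Real.norm_of_nonneg
    (inv_nonneg.mpr (pow_nonneg (div_nonneg h𝔷.le (normSq_nonneg _)) _)), norm_inv, norm_pow,
    ← Complex.sq_norm, div_pow, inv_div, ← pow_mul]
  ring

theorem summable_norm_hmlCoeff (h𝔷 : 0 < 𝔷.im) (hm : 2 * ℓ + 2 < m) :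
    Summable (‖hmlCoeff m ℓ 𝔷 ·‖) := by
  have hk : (2 : ℝ) < m - 2 * ℓ := by
    have : ((2 * ℓ + 2 : ℕ) : ℝ) < m := by exact_mod_cast hm
    push_cast at this
    linarith
  have hinj : Function.Injective fun p : CoprimePair => ![p.1.1, p.1.2] := fun p q hpq =>
    Subtype.ext (Prod.ext (by simpa using congrFun hpq 0) (by simpa using congrFun hpq 1))
  refine .of_nonneg_of_le (fun _ => norm_nonneg _) (fun p => ?_)
    ((((EisensteinSeries.summable_one_div_norm_rpow hk).mul_left
      (EisensteinSeries.r ⟨𝔷, h𝔷⟩ ^ (-((m : ℝ) - 2 * ℓ)))).comp_injective hinj).mul_left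
      (𝔷.im ^ ℓ)⁻¹)
  rw [norm_hmlCoeff h𝔷]
  gcongr
  have := EisensteinSeries.summand_bound ⟨𝔷, h𝔷⟩ (k := m - 2 * ℓ) (by linarith) ![p.1.1, p.1.2]
  simpa using this

end PoincareSeries

theorem qexp_pow (z : ℂ) (n : ℕ) : qexp z ^ n = cexp (2 * π * I * (n * z)) := by
  rw [qexp, ← Complex.exp_nat_mul]
  ring_nf

theorem Hml_der_Fourier_general (ℓ r m : ℕ) (hm : 4 + 2 * ℓ ≤ m)
    (𝔷 : ℂ) (h𝔷 : 0 < 𝔷.im) (z : ℂ)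
    (hy : ∀ M : SL2Z, (act M 𝔷).im < z.im) :
    Hder m ℓ r 𝔷 z = 2 * (π : ℂ) * Complex.I *
      ∑' n : ℕ, (∑' p : CoprimePair,
        (((Complex.normSq ((p.1.1 : ℂ) * 𝔷 + (p.1.2 : ℂ)) / 𝔷.im) ^ ℓ : ℝ) : ℂ) *
          (2 * (π : ℂ) * Complex.I * (n : ℂ)) ^ r * Bcd m p.1.1 p.1.2 𝔷 n) * qexp z ^ n := by
  obtain ⟨M, hM⟩ := exists_forall_im_moeb_le h𝔷
  have hHml : Hml m ℓ 𝔷 = fun v =>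
      2 * π * I * expKernelSum (hmlCoeff m ℓ 𝔷) (fun p => moeb p.1.1 p.1.2 𝔷) v := rfl
  rw [Hder, hHml, iteratedDeriv_const_mul_field,
    iteratedDeriv_expKernelSum (summable_norm_hmlCoeff h𝔷 (by omega)) hM r (hy M)]
  congr 1
  refine tsum_congr fun n => ?_
  rw [← tsum_mul_right]
  refine tsum_congr fun p => ?_
  rw [Bcd_eq p.2 h𝔷, qexp_pow, expKernelTerm, hmlCoeff, im_moeb p.2 h𝔷, ← inv_pow, inv_div,
    mul_sub, mul_sub, sub_eq_neg_add, Complex.exp_add]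
  ring

/-- Fourier expansion of `H^{(r)}_{m,ℓ}(𝔷,z)` as a sum over coprime pairs. -/
theorem Hml_der_Fourier (ℓ r m : ℕ) (hm : 4 + 2 * ℓ ≤ m) (hme : Even m)
    (𝔷 : ℂ) (h𝔷 : 0 < 𝔷.im) (z : ℂ) (hz : 0 < z.im)
    (hy : ∀ M : SL2Z, (act M 𝔷).im < z.im) :
    Hder m ℓ r 𝔷 z = 2 * (π : ℂ) * Complex.I *
      ∑' n : ℕ, (∑' p : CoprimePair,
        (((Complex.normSq ((p.1.1 : ℂ) * 𝔷 + (p.1.2 : ℂ)) / 𝔷.im) ^ ℓ : ℝ) : ℂ) *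
          (2 * (π : ℂ) * Complex.I * (n : ℂ)) ^ r * Bcd m p.1.1 p.1.2 𝔷 n) * qexp z ^ n :=
  Hml_der_Fourier_general ℓ r m hm 𝔷 h𝔷 z hy

end

end RamanujanMero
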